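/- arXiv:2204.11273 — 4 statements merged into one kernel-verified Lean document; each statement's English description precedes it below -/
import Mathlib

section
/- For fixed x, y ∈ (0,1), T_λ(x,y) tends to 0 as λ → 0⁺ (matching the drastic product since x, y < 1). -/
open Filter Real Topology

theorem Filter.Tendsto.rpow_atTop_of_one_lt {α : Type*} {l : Filter α} {f g : α → ℝ} {c : ℝ}
    (hf : Tendsto f l (𝓝 c)) (hc : 1 < c) (hg : Tendsto g l atTop) :
    Tendsto (fun t => f t ^ g t) l atTop := by
  have hexp := tendsto_exp_atTop.comp ((hf.log (by positivity)).pos_mul_atTop (log_pos hc) hg)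
  refine hexp.congr' ?_
  filter_upwards [hf.eventually_const_lt (zero_lt_one.trans hc)] with t ht
  rw [Function.comp_apply, rpow_def_of_pos ht]

theorem tendsto_rpow_add_rpow_rpow_one_div_nhdsGT_zero {a b : ℝ} (ha : 0 < a) (hb : 0 < b) :
    Tendsto (fun p : ℝ => (a ^ p + b ^ p) ^ (1 / p)) (𝓝[>] 0) atTop := by
  have hsum : Tendsto (fun p : ℝ => a ^ p + b ^ p) (𝓝[>] 0) (𝓝 2) := by
    have hcont : Continuous fun p : ℝ => a ^ p + b ^ p :=
      (continuous_const_rpow ha.ne').add (continuous_const_rpow hb.ne')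
    simpa [one_add_one_eq_two] using hcont.continuousWithinAt.tendsto (x := 0) (s := Set.Ioi 0)
  exact hsum.rpow_atTop_of_one_lt one_lt_two
    (tendsto_inv_nhdsGT_zero.congr fun p => (one_div p).symm)

theorem aczel_alsina_tendsto_zero (x y : ℝ)
    (hx : x ∈ Set.Ioo (0:ℝ) 1) (hy : y ∈ Set.Ioo (0:ℝ) 1) :
    Filter.Tendsto
      (fun lam : ℝ => Real.exp (-(((-Real.log x) ^ lam + (-Real.log y) ^ lam) ^ (1/lam))))
      (nhdsWithin 0 (Set.Ioi 0)) (nhds 0) := by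
  have ha : 0 < -log x := neg_pos.2 (log_neg hx.1 hx.2)
  have hb : 0 < -log y := neg_pos.2 (log_neg hy.1 hy.2)
  exact tendsto_exp_atBot.comp
    (tendsto_neg_atTop_atBot.comp (tendsto_rpow_add_rpow_rpow_one_div_nhdsGT_zero ha hb))
end

section
/- If a ≥ b with a, b ∈ [0,1], then the solution set {x ∈ [0,1] : T*(a,x) = b} is nonempty; conversely if a < b it is empty. -/
noncomputable def aczelAlsinaStar (lam a x : ℝ) : ℝ :=
  if a = 0 ∨ x = 0 then 0
  else Real.exp (-(((-Real.log a) ^ lam + (-Real.log x) ^ lam) ^ (1/lam)))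

theorem aczel_alsina_solvable_iff (lam : ℝ) (hlam : 0 < lam) (a b : ℝ)
    (ha : a ∈ Set.Icc (0:ℝ) 1) (hb : b ∈ Set.Icc (0:ℝ) 1) :
    {x : ℝ | x ∈ Set.Icc (0:ℝ) 1 ∧ aczelAlsinaStar lam a x = b}.Nonempty ↔ b ≤ a := by
  obtain ⟨ha0, ha1⟩ := ha
  obtain ⟨hb0, hb1⟩ := hb
  constructor
  · rintro ⟨x, ⟨hx0, hx1⟩, hx⟩
    rcases eq_or_lt_of_le hb0 with hb | hb
    · linarith
    unfold aczelAlsinaStar at hx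
    by_cases h : a = 0 ∨ x = 0
    · rw [if_pos h] at hx; linarith
    push_neg at h
    rw [if_neg (by tauto)] at hx
    have hax : 0 < a := lt_of_le_of_ne ha0 (Ne.symm h.1)
    have hxx : 0 < x := lt_of_le_of_ne hx0 (Ne.symm h.2)
    have hla : 0 ≤ -Real.log a := by simpa using Real.log_nonpos ha0 ha1
    have hlx : 0 ≤ -Real.log x := by simpa using Real.log_nonpos hx0 hx1
    have h1 : (-Real.log a) ^ lam ≤ (-Real.log a) ^ lam + (-Real.log x) ^ lam :=
      le_add_of_nonneg_right (Real.rpow_nonneg hlx lam)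
    have h2 : ((-Real.log a) ^ lam) ^ (1/lam)
        ≤ ((-Real.log a) ^ lam + (-Real.log x) ^ lam) ^ (1/lam) :=
      Real.rpow_le_rpow (Real.rpow_nonneg hla lam) h1 (by positivity)
    have h3 : ((-Real.log a) ^ lam) ^ (1/lam) = -Real.log a := by
      rw [one_div, Real.rpow_rpow_inv hla hlam.ne']
    rw [← hx]
    calc Real.exp (-(((-Real.log a) ^ lam + (-Real.log x) ^ lam) ^ (1/lam)))
        ≤ Real.exp (Real.log a) := by
          apply Real.exp_le_exp.mpr; rw [h3] at h2; linarith
      _ = a := Real.exp_log hax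
  · intro hba
    rcases eq_or_lt_of_le hb0 with hb | hb
    · exact ⟨0, ⟨le_refl 0, zero_le_one⟩, by simp [aczelAlsinaStar, ← hb]⟩
    have hax : 0 < a := lt_of_lt_of_le hb hba
    have hla : 0 ≤ -Real.log a := by simpa using Real.log_nonpos ha0 ha1
    have hlb : 0 ≤ -Real.log b := by simpa using Real.log_nonpos hb0 hb1
    have hlab : -Real.log a ≤ -Real.log b := by
      simpa using Real.log_le_log hb hba
    set X := (-Real.log b) ^ lam - (-Real.log a) ^ lam with hXdef
    have hX : 0 ≤ X := sub_nonneg.mpr (Real.rpow_le_rpow hla hlab hlam.le)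
    refine ⟨Real.exp (-(X ^ (1/lam))), ⟨(Real.exp_pos _).le, ?_⟩, ?_⟩
    · apply Real.exp_le_one_iff.mpr
      simp [Real.rpow_nonneg hX]
    · unfold aczelAlsinaStar
      rw [if_neg (by push_neg; exact ⟨hax.ne', (Real.exp_pos _).ne'⟩)]
      rw [Real.log_exp, neg_neg]
      rw [one_div, Real.rpow_inv_rpow hX hlam.ne']
      have : (-Real.log a) ^ lam + X = (-Real.log b) ^ lam := by ring
      rw [this, Real.rpow_rpow_inv hlb hlam.ne']
      simpa using Real.exp_log hb
end

section
/- Single-equation maximum solution: given a ∈ [0,1]^n and b ∈ [0,1] with S = {x ∈ [0,1]^n : max_j T*(a_j, x_j) = b} nonempty, let x̂ be the vector whose j-th component is the maximal value in [0,1] with T*(a_j, x̂_j) ≤ b, namely x̂_j = exp(-((-log b)^λ - (-log a_j)^λ)^(1/λ)) if a_j > b > 0, x̂_j = 0 if a_j > b = 0, and x̂_j = 1 otherwise. Then x̂ ∈ S and x ≤ x̂ (componentwise) for all x ∈ S. -/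
/-- Maximum solution of a single equation, componentwise. -/
noncomputable def maxSol (lam b : ℝ) (a : ℝ) : ℝ :=
  if b < a then
    (if b = 0 then 0
     else Real.exp (-(((-Real.log b) ^ lam - (-Real.log a) ^ lam) ^ (1/lam))))
  else 1

lemma aa_nonneg (lam a x : ℝ) : 0 ≤ aczelAlsinaStar lam a x := by
  unfold aczelAlsinaStar
  split
  · exact le_refl 0
  · exact (Real.exp_pos _).le

lemma aa_one (lam : ℝ) (hlam : 0 < lam) {a : ℝ} (ha : a ∈ Set.Icc (0:ℝ) 1) :
    aczelAlsinaStar lam a 1 = a := by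
  unfold aczelAlsinaStar
  rcases eq_or_lt_of_le ha.1 with h | h
  · simp [← h]
  · rw [if_neg (by push_neg; exact ⟨ne_of_gt h, one_ne_zero⟩)]
    have hla : 0 ≤ -Real.log a := by
      have := Real.log_nonpos ha.1 ha.2; linarith
    rw [Real.log_one, neg_zero, Real.zero_rpow (ne_of_gt hlam), add_zero, one_div,
      Real.rpow_rpow_inv hla (ne_of_gt hlam), neg_neg, Real.exp_log h]

lemma aa_mono (lam : ℝ) (hlam : 0 < lam) {a x y : ℝ} (ha : a ∈ Set.Icc (0:ℝ) 1)
    (hx : 0 ≤ x) (hxy : x ≤ y) (hy : y ≤ 1) :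
    aczelAlsinaStar lam a x ≤ aczelAlsinaStar lam a y := by
  rcases eq_or_lt_of_le hx with hx0 | hx0
  · rw [show aczelAlsinaStar lam a x = 0 by unfold aczelAlsinaStar; rw [if_pos (Or.inr hx0.symm)]]
    exact aa_nonneg lam a y
  rcases eq_or_lt_of_le ha.1 with ha0 | ha0
  · unfold aczelAlsinaStar
    rw [if_pos (Or.inl ha0.symm), if_pos (Or.inl ha0.symm)]
  have hy0 : 0 < y := lt_of_lt_of_le hx0 hxy
  unfold aczelAlsinaStar
  rw [if_neg (by push_neg; exact ⟨ne_of_gt ha0, ne_of_gt hx0⟩),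
    if_neg (by push_neg; exact ⟨ne_of_gt ha0, ne_of_gt hy0⟩)]
  have hla : 0 ≤ -Real.log a := by
    have := Real.log_nonpos ha.1 ha.2; linarith
  have hly : 0 ≤ -Real.log y := by have := Real.log_nonpos hy0.le hy; linarith
  apply Real.exp_le_exp.mpr
  apply neg_le_neg
  apply Real.rpow_le_rpow
    (add_nonneg (Real.rpow_nonneg hla _) (Real.rpow_nonneg hly _))
  · have h1 : -Real.log y ≤ -Real.log x := by
      have := Real.log_le_log hx0 hxy; linarith
    have := Real.rpow_le_rpow hly h1 hlam.le
    linarith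
  · positivity

lemma maxSol_mem (lam : ℝ) (hlam : 0 < lam) {a b : ℝ} (ha : a ∈ Set.Icc (0:ℝ) 1)
    (hb : b ∈ Set.Icc (0:ℝ) 1) : maxSol lam b a ∈ Set.Icc (0:ℝ) 1 := by
  unfold maxSol
  split
  · rename_i hba
    split
    · exact ⟨le_refl 0, zero_le_one⟩
    · rename_i hb0
      have hb0' : 0 < b := lt_of_le_of_ne hb.1 (Ne.symm hb0)
      have hla : 0 ≤ -Real.log a := by
        have := Real.log_nonpos ha.1 ha.2; linarith
      have hlb : -Real.log a ≤ -Real.log b := by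
        have := Real.log_le_log hb0' hba.le; linarith
      have hD : 0 ≤ (-Real.log b) ^ lam - (-Real.log a) ^ lam := by
        have := Real.rpow_le_rpow hla hlb hlam.le; linarith
      constructor
      · exact (Real.exp_pos _).le
      · rw [Real.exp_le_one_iff]
        have : 0 ≤ ((-Real.log b) ^ lam - (-Real.log a) ^ lam) ^ (1/lam) :=
          Real.rpow_nonneg hD _
        linarith
  · exact ⟨zero_le_one, le_refl 1⟩

lemma aa_maxSol_le (lam : ℝ) (hlam : 0 < lam) {a b : ℝ} (ha : a ∈ Set.Icc (0:ℝ) 1)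
    (hb : b ∈ Set.Icc (0:ℝ) 1) : aczelAlsinaStar lam a (maxSol lam b a) ≤ b := by
  unfold maxSol
  split
  · rename_i hba
    have ha0 : 0 < a := lt_of_le_of_lt hb.1 hba
    split
    · rename_i hb0
      subst hb0
      unfold aczelAlsinaStar
      rw [if_pos (Or.inr rfl)]
    · rename_i hb0
      have hb0' : 0 < b := lt_of_le_of_ne hb.1 (Ne.symm hb0)
      have hla : 0 ≤ -Real.log a := by
        have := Real.log_nonpos ha.1 ha.2; linarith
      have hlb : -Real.log a ≤ -Real.log b := by
        have := Real.log_le_log hb0' hba.le; linarith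
      have hD : 0 ≤ (-Real.log b) ^ lam - (-Real.log a) ^ lam := by
        have := Real.rpow_le_rpow hla hlb hlam.le; linarith
      unfold aczelAlsinaStar
      rw [if_neg (by push_neg; exact ⟨ne_of_gt ha0, ne_of_gt (Real.exp_pos _)⟩)]
      rw [Real.log_exp, neg_neg, one_div,
        Real.rpow_inv_rpow hD (ne_of_gt hlam), add_sub_cancel,
        Real.rpow_rpow_inv (by linarith) (ne_of_gt hlam), neg_neg, Real.exp_log hb0']
  · rename_i hba
    rw [aa_one lam hlam ha]
    exact le_of_not_gt hba

lemma le_maxSol (lam : ℝ) (hlam : 0 < lam) {a b x : ℝ} (ha : a ∈ Set.Icc (0:ℝ) 1)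
    (hb : b ∈ Set.Icc (0:ℝ) 1) (hx : x ∈ Set.Icc (0:ℝ) 1)
    (h : aczelAlsinaStar lam a x ≤ b) : x ≤ maxSol lam b a := by
  unfold maxSol
  split
  · rename_i hba
    have ha0 : 0 < a := lt_of_le_of_lt hb.1 hba
    split
    · rename_i hb0
      subst hb0
      by_contra hc
      push_neg at hc
      have hx0 : 0 < x := hc
      have : aczelAlsinaStar lam a x > 0 := by
        unfold aczelAlsinaStar
        rw [if_neg (by push_neg; exact ⟨ne_of_gt ha0, ne_of_gt hx0⟩)]
        exact Real.exp_pos _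
      linarith
    · rename_i hb0
      have hb0' : 0 < b := lt_of_le_of_ne hb.1 (Ne.symm hb0)
      rcases eq_or_lt_of_le hx.1 with hx0 | hx0
      · rw [← hx0]; exact (Real.exp_pos _).le
      have hla : 0 ≤ -Real.log a := by
        have := Real.log_nonpos ha.1 ha.2; linarith
      have hlx : 0 ≤ -Real.log x := by
        have := Real.log_nonpos hx.1 hx.2; linarith
      have hlb : -Real.log a ≤ -Real.log b := by
        have := Real.log_le_log hb0' hba.le; linarith
      have hD : 0 ≤ (-Real.log b) ^ lam - (-Real.log a) ^ lam := by
        have := Real.rpow_le_rpow hla hlb hlam.le; linarith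
      have hT : aczelAlsinaStar lam a x =
          Real.exp (-(((-Real.log a) ^ lam + (-Real.log x) ^ lam) ^ (1/lam))) := by
        unfold aczelAlsinaStar
        rw [if_neg (by push_neg; exact ⟨ne_of_gt ha0, ne_of_gt hx0⟩)]
      rw [hT, ← Real.exp_log hb0', Real.exp_le_exp] at h
      have hE : 0 ≤ (-Real.log a) ^ lam + (-Real.log x) ^ lam :=
        add_nonneg (Real.rpow_nonneg hla _) (Real.rpow_nonneg hlx _)
      have h1 : -Real.log b ≤ ((-Real.log a) ^ lam + (-Real.log x) ^ lam) ^ (1/lam) := by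
        linarith
      have h2 : (-Real.log b) ^ lam ≤ (-Real.log a) ^ lam + (-Real.log x) ^ lam := by
        have := Real.rpow_le_rpow (by linarith) h1 hlam.le
        rwa [one_div, Real.rpow_inv_rpow hE (ne_of_gt hlam)] at this
      set c := ((-Real.log b) ^ lam - (-Real.log a) ^ lam) ^ (1/lam) with hc
      have hc0 : 0 ≤ c := Real.rpow_nonneg hD _
      have hcx : c ≤ -Real.log x := by
        by_contra hcc
        push_neg at hcc
        have := Real.rpow_lt_rpow hlx hcc hlam
        rw [hc, one_div, Real.rpow_inv_rpow hD (ne_of_gt hlam)] at this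
        linarith
      calc x = Real.exp (Real.log x) := (Real.exp_log hx0).symm
        _ ≤ Real.exp (-c) := Real.exp_le_exp.mpr (by linarith)
  · exact hx.2

theorem single_equation_max_solution (lam : ℝ) (hlam : 0 < lam) (n : ℕ) (hn : 0 < n)
    (a : Fin n → ℝ) (ha : ∀ j, a j ∈ Set.Icc (0:ℝ) 1) (b : ℝ) (hb : b ∈ Set.Icc (0:ℝ) 1)
    (S : Set (Fin n → ℝ))
    (hS : S = {x : Fin n → ℝ | (∀ j, x j ∈ Set.Icc (0:ℝ) 1) ∧
      Finset.univ.sup' ⟨⟨0, hn⟩, Finset.mem_univ _⟩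
        (fun j => aczelAlsinaStar lam (a j) (x j)) = b})
    (hne : S.Nonempty) :
    (fun j => maxSol lam b (a j)) ∈ S ∧ ∀ x ∈ S, ∀ j, x j ≤ maxSol lam b (a j) := by
  subst hS
  obtain ⟨x, hxmem, hxsup⟩ := hne
  -- every x ∈ S satisfies T*(a j, x j) ≤ b for each j, hence x j ≤ maxSol
  have key : ∀ y : Fin n → ℝ, (∀ j, y j ∈ Set.Icc (0:ℝ) 1) →
      Finset.univ.sup' ⟨⟨0, hn⟩, Finset.mem_univ _⟩
        (fun j => aczelAlsinaStar lam (a j) (y j)) = b →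
      ∀ j, y j ≤ maxSol lam b (a j) := by
    intro y hy hysup j
    have : aczelAlsinaStar lam (a j) (y j) ≤ b := by
      rw [← hysup]
      exact Finset.le_sup' (fun j => aczelAlsinaStar lam (a j) (y j)) (Finset.mem_univ j)
    exact le_maxSol lam hlam (ha j) hb (hy j) this
  refine ⟨⟨fun j => maxSol_mem lam hlam (ha j) hb, ?_⟩, fun y hy j => key y hy.1 hy.2 j⟩
  show Finset.univ.sup' ⟨⟨0, hn⟩, Finset.mem_univ _⟩
    (fun j => aczelAlsinaStar lam (a j) (maxSol lam b (a j))) = b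
  apply le_antisymm
  · apply Finset.sup'_le
    intro j _
    exact aa_maxSol_le lam hlam (ha j) hb
  · obtain ⟨j, _, hj⟩ := Finset.exists_mem_eq_sup'
      (⟨⟨0, hn⟩, Finset.mem_univ _⟩ : (Finset.univ : Finset (Fin n)).Nonempty)
      (fun j => aczelAlsinaStar lam (a j) (x j))
    have hjb : aczelAlsinaStar lam (a j) (x j) = b := by rw [← hj, hxsup]
    have hle : x j ≤ maxSol lam b (a j) := key x hxmem hxsup j
    calc b = aczelAlsinaStar lam (a j) (x j) := hjb.symm
      _ ≤ aczelAlsinaStar lam (a j) (maxSol lam b (a j)) :=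
        aa_mono lam hlam (ha j) (hxmem j).1 hle (maxSol_mem lam hlam (ha j) hb).2
      _ ≤ Finset.univ.sup' ⟨⟨0, hn⟩, Finset.mem_univ _⟩
          (fun j => aczelAlsinaStar lam (a j) (maxSol lam b (a j))) :=
        Finset.le_sup' (fun j => aczelAlsinaStar lam (a j) (maxSol lam b (a j)))
          (Finset.mem_univ j)
end

section
/- Abstract lower-bound lemma: if a set S ⊆ ℝ^n is contained in a union of boxes ⋃_e [l_e, u] with common upper bound u, and x* is defined coordinatewise as x*_j = u_j when c_j < 0 and x*_j = l_{e*,j} when c_j ≥ 0 where e* minimizes ∑_j max(c_j,0)·l_{e,j}, then ∑ c_j x*_j ≤ ∑ c_j x_j for all x ∈ S. -/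
/-! Split each coefficient as `c = min c 0 + max c 0`. On a box `[l, u]` the linear form
`x ↦ c * x` is bounded below by `min c 0 * u + max c 0 * l`, and this bound is attained at the
vertex taking `u` where `c < 0` and `l` elsewhere. The `u`-part of the bound is shared by all
boxes, so the smallest bound over the union is the one of the box `e*` minimising the `l`-part. -/

theorem mul_ite_neg_eq_min_mul_add_max_mul {α : Type*} [CommRing α] [LinearOrder α] (c a b : α) :
    c * (if c < 0 then a else b) = min c 0 * a + max c 0 * b := by
  split_ifs with hc
  · simp [min_eq_left hc.le, max_eq_right hc.le]
  · simp [min_eq_right (not_lt.mp hc), max_eq_left (not_lt.mp hc)]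

theorem min_mul_add_max_mul_le_mul {α : Type*} [CommRing α] [LinearOrder α] [IsStrictOrderedRing α]
    (c : α) {l x u : α} (hlx : l ≤ x) (hxu : x ≤ u) :
    min c 0 * u + max c 0 * l ≤ c * x :=
  calc min c 0 * u + max c 0 * l
      ≤ min c 0 * x + max c 0 * x :=
        add_le_add (mul_le_mul_of_nonpos_left hxu (min_le_right _ _))
          (mul_le_mul_of_nonneg_left hlx (le_max_right _ _))
    _ = c * x := by rw [← add_mul, min_add_max, add_zero]

theorem abstract_lower_bound_general (n : ℕ) (E : Type*)
    (u : Fin n → ℝ) (l : E → Fin n → ℝ)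
    (S : Set (Fin n → ℝ))
    (hS : ∀ x ∈ S, ∃ e : E, ∀ j, l e j ≤ x j ∧ x j ≤ u j)
    (c : Fin n → ℝ) (estar : E)
    (hmin : ∀ e : E, ∑ j, max (c j) 0 * l estar j ≤ ∑ j, max (c j) 0 * l e j)
    (xstar : Fin n → ℝ)
    (hxstar : xstar = fun j => if c j < 0 then u j else l estar j) :
    ∀ x ∈ S, ∑ j, c j * xstar j ≤ ∑ j, c j * x j := by
  intro x hx
  obtain ⟨e, he⟩ := hS x hx
  subst hxstar
  calc ∑ j, c j * (if c j < 0 then u j else l estar j)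
      = ∑ j, min (c j) 0 * u j + ∑ j, max (c j) 0 * l estar j := by
        simp only [mul_ite_neg_eq_min_mul_add_max_mul, Finset.sum_add_distrib]
    _ ≤ ∑ j, min (c j) 0 * u j + ∑ j, max (c j) 0 * l e j := add_le_add_right (hmin e) _
    _ = ∑ j, (min (c j) 0 * u j + max (c j) 0 * l e j) := Finset.sum_add_distrib.symm
    _ ≤ ∑ j, c j * x j :=
        Finset.sum_le_sum fun j _ => min_mul_add_max_mul_le_mul (c j) (he j).1 (he j).2

theorem abstract_lower_bound (n : ℕ) (E : Type*) [Fintype E] [Nonempty E]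
    (u : Fin n → ℝ) (l : E → Fin n → ℝ) (hl : ∀ e j, l e j ≤ u j)
    (S : Set (Fin n → ℝ))
    (hS : ∀ x ∈ S, ∃ e : E, ∀ j, l e j ≤ x j ∧ x j ≤ u j)
    (c : Fin n → ℝ) (estar : E)
    (hmin : ∀ e : E, ∑ j, max (c j) 0 * l estar j ≤ ∑ j, max (c j) 0 * l e j)
    (xstar : Fin n → ℝ)
    (hxstar : xstar = fun j => if c j < 0 then u j else l estar j) :
    ∀ x ∈ S, ∑ j, c j * xstar j ≤ ∑ j, c j * x j :=
  abstract_lower_bound_general n E u l S hS c estar hmin xstar hxstar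
end
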